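/- In IMG(z²+i) with x = [a,b], y = [b,c], z = aya, t = cxcy⁻¹x⁻¹, w = ata, the following conjugation relations hold: axa = x⁻¹, bxb = x⁻¹, cxc = txy, aya = z, byb = y⁻¹, cyc = y⁻¹, aza = y, bzb = x⁻¹z⁻¹x, czc = z, ata = w, btb = x⁻¹t⁻¹x, ctc = t⁻¹, awa = t, bwb = w⁻¹, cwc = w. -/

import Mathlib

/-- The generator `a = (1,1)σ` of `IMG(z²+i)`, acting on the binary rooted tree
whose vertices are finite binary words. -/
def aF : List Bool → List Bool
  | [] => []
  | x :: s => (!x) :: s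

mutual
/-- The generator `b = (a, c)` of `IMG(z²+i)`. -/
def bF : List Bool → List Bool
  | [] => []
  | false :: s => false :: aF s
  | true :: s => true :: cF s
/-- The generator `c = (b, 1)` of `IMG(z²+i)`. -/
def cF : List Bool → List Bool
  | [] => []
  | false :: s => false :: bF s
  | true :: s => true :: s
end

theorem aF_invol : ∀ s, aF (aF s) = s := by
  intro s; cases s <;> simp [aF]

theorem bcF_invol : ∀ s, bF (bF s) = s ∧ cF (cF s) = s := by
  intro s
  induction s with
  | nil => exact ⟨rfl, rfl⟩
  | cons x s ih =>
    cases x <;> exact ⟨by simp [bF, ih.1, ih.2, aF_invol], by simp [cF, ih.1]⟩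

/-- `a` as a tree automorphism. -/
def aE : Equiv.Perm (List Bool) := ⟨aF, aF, aF_invol, aF_invol⟩
/-- `b` as a tree automorphism. -/
def bE : Equiv.Perm (List Bool) := ⟨bF, bF, fun s => (bcF_invol s).1, fun s => (bcF_invol s).1⟩
/-- `c` as a tree automorphism. -/
def cE : Equiv.Perm (List Bool) := ⟨cF, cF, fun s => (bcF_invol s).2, fun s => (bcF_invol s).2⟩

open scoped commutatorElement

/-- `x = [a,b]`. -/
def xE : Equiv.Perm (List Bool) := ⁅aE, bE⁆
/-- `y = [b,c]`. -/
def yE : Equiv.Perm (List Bool) := ⁅bE, cE⁆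
/-- `z = a y a`. -/
def zE : Equiv.Perm (List Bool) := aE * yE * aE
/-- `t = c x c y⁻¹ x⁻¹`. -/
def tE : Equiv.Perm (List Bool) := cE * xE * cE * yE⁻¹ * xE⁻¹
/-- `w = a t a`. -/
def wE : Equiv.Perm (List Bool) := aE * tE * aE

/-!
Thirteen of the fifteen relations hold in every group generated by three involutions: once
`x, y, z, t, w` are written out as words in `a, b, c`, both sides reduce to the same word after
cancelling `aa`, `bb` and `cc`. The remaining two, `czc = z` and `cwc = w`, use the action on the
tree: `y` and `t` fix every word beginning with `1`, so their conjugates `z = aya` and `w = ata`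
move only words beginning with `1`, whereas `c = (b, 1)` moves only words beginning with `0`.
Permutations with disjoint supports commute.
-/

open Equiv

section Involution

variable {G : Type*} [Group G] {a : G}

theorem mul_mul_cancel_of_mul_self (ha : a * a = 1) (g : G) : a * (a * g) = g := by
  rw [← mul_assoc, ha, one_mul]

theorem mul_mul_eq_of_commute (ha : a * a = 1) {g : G} (h : Commute a g) : a * g * a = g := by
  rw [h.eq, mul_assoc, ha, mul_one]

end Involution

@[simp] theorem aE_aE_apply (s : List Bool) : aE (aE s) = s := aF_invol s
@[simp] theorem bE_bE_apply (s : List Bool) : bE (bE s) = s := (bcF_invol s).1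
@[simp] theorem cE_cE_apply (s : List Bool) : cE (cE s) = s := (bcF_invol s).2

@[simp] theorem aE_mul_self : aE * aE = 1 := Perm.ext aE_aE_apply
@[simp] theorem bE_mul_self : bE * bE = 1 := Perm.ext bE_bE_apply
@[simp] theorem cE_mul_self : cE * cE = 1 := Perm.ext cE_cE_apply

@[simp] theorem aE_mul_aE_mul (g : Perm (List Bool)) : aE * (aE * g) = g :=
  mul_mul_cancel_of_mul_self aE_mul_self g
@[simp] theorem bE_mul_bE_mul (g : Perm (List Bool)) : bE * (bE * g) = g :=
  mul_mul_cancel_of_mul_self bE_mul_self g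
@[simp] theorem cE_mul_cE_mul (g : Perm (List Bool)) : cE * (cE * g) = g :=
  mul_mul_cancel_of_mul_self cE_mul_self g

@[simp] theorem aE_inv : aE⁻¹ = aE := inv_eq_of_mul_eq_one_right aE_mul_self
@[simp] theorem bE_inv : bE⁻¹ = bE := inv_eq_of_mul_eq_one_right bE_mul_self
@[simp] theorem cE_inv : cE⁻¹ = cE := inv_eq_of_mul_eq_one_right cE_mul_self

@[simp] theorem aE_apply_cons (v : Bool) (s : List Bool) : aE (v :: s) = (!v) :: s := rfl
@[simp] theorem bE_apply_false_cons (s : List Bool) : bE (false :: s) = false :: aE s := rfl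
@[simp] theorem bE_apply_true_cons (s : List Bool) : bE (true :: s) = true :: cE s := rfl
@[simp] theorem cE_apply_false_cons (s : List Bool) : cE (false :: s) = false :: bE s := rfl
@[simp] theorem cE_apply_true_cons (s : List Bool) : cE (true :: s) = true :: s := rfl

theorem yE_apply_true_cons (s : List Bool) : yE (true :: s) = true :: s := by
  simp [yE, commutatorElement_def, Perm.mul_apply]

theorem tE_apply_true_cons (s : List Bool) : tE (true :: s) = true :: s := by
  simp [tE, xE, yE, commutatorElement_def, Perm.mul_apply]

theorem disjoint_cE_of_apply_false_cons {g : Perm (List Bool)}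
    (h : ∀ s, g (false :: s) = false :: s) : cE.Disjoint g
  | [] => .inl rfl
  | false :: s => .inr (h s)
  | true :: _ => .inl rfl

theorem cE_mul_aE_conj_mul_cE {g : Perm (List Bool)} (h : ∀ s, g (true :: s) = true :: s) :
    cE * (aE * g * aE) * cE = aE * g * aE :=
  mul_mul_eq_of_commute cE_mul_self <| Perm.Disjoint.commute <|
    disjoint_cE_of_apply_false_cons fun s => by simp [Perm.mul_apply, h]

/-- The conjugation relations among the generators `x,y,z,t,w` of the
branching subgroup `K` of `IMG(z²+i)` under conjugation by `a`, `b`, `c`. -/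
theorem stmt_13 :
    (aE * xE * aE = xE⁻¹ ∧ bE * xE * bE = xE⁻¹ ∧ cE * xE * cE = tE * xE * yE) ∧
    (aE * yE * aE = zE ∧ bE * yE * bE = yE⁻¹ ∧ cE * yE * cE = yE⁻¹) ∧
    (aE * zE * aE = yE ∧ bE * zE * bE = xE⁻¹ * zE⁻¹ * xE ∧ cE * zE * cE = zE) ∧
    (aE * tE * aE = wE ∧ bE * tE * bE = xE⁻¹ * tE⁻¹ * xE ∧ cE * tE * cE = tE⁻¹) ∧
    (aE * wE * aE = tE ∧ bE * wE * bE = wE⁻¹ ∧ cE * wE * cE = wE) := by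
  have hz : cE * zE * cE = zE := cE_mul_aE_conj_mul_cE yE_apply_true_cons
  have hw : cE * wE * cE = wE := cE_mul_aE_conj_mul_cE tE_apply_true_cons
  refine ⟨⟨?_, ?_, ?_⟩, ⟨?_, ?_, ?_⟩, ⟨?_, ?_, hz⟩, ⟨?_, ?_, ?_⟩, ⟨?_, ?_, hw⟩⟩ <;>
    simp [xE, yE, zE, tE, wE, commutatorElement_def, mul_assoc]
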